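/- arXiv:2601.17521 — 3 statements merged into one kernel-verified Lean document; each statement's English description precedes it below -/
import Mathlib

section
/- Let A be a finite nonempty alphabet and let Z be an infinite set of positions over A. If ∑'_{p ∈ Z} (1/|A|)^{⌊len(p)/2⌋} ≤ 1, then Player 2 has a winning strategy for Z. -/
/-!
Player 2 plays so as to keep the game in a *safe* position `q`: the weight
`∑_{p ∈ Z, q <+: p} |A|^{-⌊|p|/2⌋}` of the targets still reachable from `q` is at most
`|A|^{-⌊|q|/2⌋}`, and in case of equality infinitely many targets are still reachable.
A move of Player 1 does not change the budget and can only lose targets, so it keeps `q`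
safe. Before a move of Player 2 the budget is the sum of the budgets of the `|A|` possible
successors and the target weight is at least the sum of theirs, so some successor is safe.
A safe position is never in `Z`: it would contribute its full budget on its own, leaving
no room for the infinitely many other reachable targets.
-/

open scoped ENNReal

variable {A : Type*}

/-- A position `p` is a prefix of the play `x`. -/
def PrefixOfPlay (p : List A) (x : ℕ → A) : Prop :=
  List.ofFn (fun i : Fin p.length => x i) = p

/-- The play `x` is consistent with the Player 1 strategy `s₁`. -/
def Consistent1 (s₁ : List A → A) (x : ℕ → A) : Prop :=
  ∀ n : ℕ, x (2 * n) = s₁ (List.ofFn (fun i : Fin (2 * n) => x i))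

/-- The play `x` is consistent with the Player 2 strategy `s₂`. -/
def Consistent2 (s₂ : List A → A) (x : ℕ → A) : Prop :=
  ∀ n : ℕ, x (2 * n + 1) = s₂ (List.ofFn (fun i : Fin (2 * n + 1) => x i))

/-- Player 1 has a winning strategy for the open set determined by `Z`. -/
def P1Wins (Z : Set (List A)) : Prop :=
  ∃ s₁ : List A → A, ∀ x : ℕ → A, Consistent1 s₁ x → ∃ p ∈ Z, PrefixOfPlay p x

/-- Player 2 has a winning strategy for the open set determined by `Z`. -/
def P2Wins (Z : Set (List A)) : Prop :=
  ∃ s₂ : List A → A, ∀ x : ℕ → A, Consistent2 s₂ x → ¬ ∃ p ∈ Z, PrefixOfPlay p x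


lemma ofFn_succ_eq_append (x : ℕ → A) (n : ℕ) :
    List.ofFn (fun i : Fin (n + 1) => x i) = List.ofFn (fun i : Fin n => x i) ++ [x n] := by
  rw [List.ofFn_succ']
  simp [List.concat_eq_append]

theorem p2Wins_of_invariant [Nonempty A] {Z : Set (List A)} (I : List A → Prop) (hnil : I [])
    (hZ : ∀ q, I q → q ∉ Z) (heven : ∀ q a, Even q.length → I q → I (q ++ [a]))
    (hodd : ∀ q, Odd q.length → I q → ∃ a, I (q ++ [a])) : P2Wins Z := by
  classical
  let s₂ : List A → A := fun q =>
    if h : ∃ a, I (q ++ [a]) then h.choose else Classical.arbitrary A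
  refine ⟨s₂, fun x hx ⟨p, hpZ, hpx⟩ => ?_⟩
  have hI : ∀ n, I (List.ofFn fun i : Fin n => x i) := by
    intro n
    induction n with
    | zero => simpa using hnil
    | succ n ih =>
      rw [ofFn_succ_eq_append]
      rcases Nat.even_or_odd n with he | ⟨m, rfl⟩
      · exact heven _ _ (by simpa using he) ih
      · have hex := hodd _ (by simp) ih
        rw [hx m]
        simp only [s₂, dif_pos hex]
        exact hex.choose_spec
  exact hZ p (hpx ▸ hI p.length) hpZ

lemma List.eq_of_append_singleton_prefix {q p : List A} {a b : A}
    (ha : q ++ [a] <+: p) (hb : q ++ [b] <+: p) : a = b := by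
  simpa using (List.prefix_of_prefix_length_le ha hb (by simp)).eq_of_length (by simp)

lemma List.IsPrefix.eq_or_append_singleton_prefix {q p : List A} (h : q <+: p) :
    p = q ∨ ∃ a, q ++ [a] <+: p := by
  obtain ⟨t, rfl⟩ := h
  cases t with
  | nil => simp
  | cons a t => exact Or.inr ⟨a, t, by simp⟩

lemma ENNReal.le_of_sum_le_sum_of_le {ι : Type*} {s : Finset ι} {f g : ι → ℝ≥0∞}
    (hfg : ∀ i ∈ s, f i ≤ g i) (hsum : ∑ i ∈ s, g i ≤ ∑ i ∈ s, f i) (hf : ∑ i ∈ s, f i ≠ ∞)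
    {i : ι} (hi : i ∈ s) : g i ≤ f i := by
  classical
  rw [← Finset.add_sum_erase s f hi, ← Finset.add_sum_erase s g hi] at hsum
  have hrest : ∑ j ∈ s.erase i, f j ≤ ∑ j ∈ s.erase i, g j :=
    Finset.sum_le_sum fun j hj => hfg j (Finset.mem_of_mem_erase hj)
  have hne : ∑ j ∈ s.erase i, f j ≠ ∞ :=
    ne_top_of_le_ne_top hf (Finset.sum_le_sum_of_subset (Finset.erase_subset i s))
  exact ENNReal.le_of_add_le_add_right hne ((add_le_add le_rfl hrest).trans hsum)

section Potential

variable (w : List A → ℝ≥0∞) (Z : Set (List A))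

def extensions (q : List A) : Set (List A) := {p | p ∈ Z ∧ q <+: p}

noncomputable def extensionWeight (q : List A) : ℝ≥0∞ :=
  ∑' p, (extensions Z q).indicator w p

def IsSafe (q : List A) : Prop :=
  extensionWeight w Z q ≤ w q ∧ (extensionWeight w Z q = w q → (extensions Z q).Infinite)

variable {w Z}

lemma extensions_snoc_subset (q : List A) (a : A) :
    extensions Z (q ++ [a]) ⊆ extensions Z q :=
  fun _ ⟨hpZ, hp⟩ => ⟨hpZ, (List.prefix_append q [a]).trans hp⟩

lemma extensions_subset_insert_iUnion (q : List A) :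
    extensions Z q ⊆ insert q (⋃ a, extensions Z (q ++ [a])) := by
  rintro p ⟨hpZ, hqp⟩
  rcases hqp.eq_or_append_singleton_prefix with rfl | ⟨a, ha⟩
  · exact Set.mem_insert _ _
  · exact Set.mem_insert_of_mem _ (Set.mem_iUnion.mpr ⟨a, hpZ, ha⟩)

lemma le_extensionWeight {p q : List A} (hp : p ∈ extensions Z q) :
    w p ≤ extensionWeight w Z q := by
  have h := ENNReal.le_tsum (f := (extensions Z q).indicator w) p
  rwa [Set.indicator_of_mem hp] at h

lemma add_le_extensionWeight {p p' q : List A} (hp : p ∈ extensions Z q)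
    (hp' : p' ∈ extensions Z q) (hne : p ≠ p') : w p + w p' ≤ extensionWeight w Z q := by
  classical
  have h := ENNReal.sum_le_tsum (f := (extensions Z q).indicator w) {p, p'}
  rwa [Finset.sum_pair hne, Set.indicator_of_mem hp, Set.indicator_of_mem hp'] at h

lemma extensionWeight_snoc_le (q : List A) (a : A) :
    extensionWeight w Z (q ++ [a]) ≤ extensionWeight w Z q :=
  ENNReal.tsum_le_tsum (Set.indicator_le_indicator_of_subset (extensions_snoc_subset q a)
    (fun _ => bot_le))

lemma sum_extensionWeight_snoc_le [Fintype A] (q : List A) :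
    ∑ a, extensionWeight w Z (q ++ [a]) ≤ extensionWeight w Z q := by
  simp only [extensionWeight]
  rw [← Summable.tsum_finsetSum fun _ _ => ENNReal.summable]
  refine ENNReal.tsum_le_tsum fun p => ?_
  by_cases h : ∃ a, p ∈ extensions Z (q ++ [a])
  · obtain ⟨a, ha⟩ := h
    rw [Finset.sum_eq_single a (fun b _ hb => Set.indicator_of_notMem
      (fun hb' => hb (List.eq_of_append_singleton_prefix hb'.2 ha.2)) w) (by simp),
      Set.indicator_of_mem ha, Set.indicator_of_mem (extensions_snoc_subset q a ha)]
  · push Not at h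
    simp [h]

lemma extensions_subset_of_extensionWeight_snoc_eq (hw : ∀ p, w p ≠ 0) {q : List A} {a : A}
    (heq : extensionWeight w Z (q ++ [a]) = extensionWeight w Z q)
    (htop : extensionWeight w Z q ≠ ∞) : extensions Z q ⊆ extensions Z (q ++ [a]) := by
  intro p hp
  by_contra hp'
  have hlt : extensionWeight w Z (q ++ [a]) < extensionWeight w Z q := by
    refine ENNReal.tsum_lt_tsum (show extensionWeight w Z (q ++ [a]) ≠ ∞ from heq ▸ htop)
      (Set.indicator_le_indicator_of_subset (extensions_snoc_subset q a) fun _ => bot_le)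
      (i := p) ?_
    simpa [hp, hp'] using pos_iff_ne_zero.mpr (hw p)
  exact hlt.ne heq

lemma IsSafe.notMem (hw : ∀ p, w p ≠ 0) (hwtop : ∀ p, w p ≠ ∞) {q : List A}
    (hq : IsSafe w Z q) : q ∉ Z := by
  intro hqZ
  have hqq : q ∈ extensions Z q := ⟨hqZ, List.prefix_refl q⟩
  have heq : extensionWeight w Z q = w q := le_antisymm hq.1 (le_extensionWeight hqq)
  obtain ⟨p, hp, hpq⟩ := ((hq.2 heq).sdiff (Set.finite_singleton q)).nonempty
  have hsum : w q + w p ≤ w q + 0 := by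
    simpa [heq] using add_le_extensionWeight (w := w) hqq hp (Ne.symm hpq)
  exact hw p (nonpos_iff_eq_zero.mp (ENNReal.le_of_add_le_add_left (hwtop q) hsum))

lemma IsSafe.snoc_of_le (hw : ∀ p, w p ≠ 0) {q : List A} (hq : IsSafe w Z q) (hqtop : w q ≠ ∞)
    {a : A} (hle : w q ≤ w (q ++ [a])) : IsSafe w Z (q ++ [a]) := by
  have hchild := extensionWeight_snoc_le (w := w) (Z := Z) q a
  refine ⟨hchild.trans (hq.1.trans hle), fun heq => ?_⟩
  have hparent : extensionWeight w Z q = w q :=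
    le_antisymm hq.1 (hle.trans (heq.ge.trans hchild))
  have hsnoc : extensionWeight w Z (q ++ [a]) = extensionWeight w Z q :=
    le_antisymm hchild (hparent.le.trans (hle.trans heq.ge))
  exact (hq.2 hparent).mono
    (extensions_subset_of_extensionWeight_snoc_eq hw hsnoc (hparent ▸ hqtop))

lemma IsSafe.exists_snoc_of_le_sum [Fintype A] {q : List A} (hq : IsSafe w Z q)
    (hqtop : w q ≠ ∞) (hle : w q ≤ ∑ a, w (q ++ [a])) : ∃ a, IsSafe w Z (q ++ [a]) := by
  by_cases hlt : ∃ a, extensionWeight w Z (q ++ [a]) < w (q ++ [a])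
  · obtain ⟨a, ha⟩ := hlt
    exact ⟨a, ha.le, fun h => absurd h ha.ne⟩
  push Not at hlt
  have hchildren : ∑ a, w (q ++ [a]) ≤ ∑ a, extensionWeight w Z (q ++ [a]) :=
    Finset.sum_le_sum fun a _ => hlt a
  have hsum := sum_extensionWeight_snoc_le (w := w) (Z := Z) q
  have hparent : extensionWeight w Z q = w q :=
    le_antisymm hq.1 (hle.trans (hchildren.trans hsum))
  obtain ⟨a, ha⟩ : ∃ a, (extensions Z (q ++ [a])).Infinite := by
    by_contra! hfin
    exact hq.2 hparent
      (((Set.finite_iUnion hfin).insert q).subset (extensions_subset_insert_iUnion q))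
  refine ⟨a, ?_, fun _ => ha⟩
  exact ENNReal.le_of_sum_le_sum_of_le (fun b _ => hlt b) (hsum.trans (hparent ▸ hle))
    (ne_top_of_le_ne_top hqtop (hchildren.trans (hsum.trans hq.1))) (Finset.mem_univ a)

theorem p2Wins_of_isSafe_nil [Fintype A] [Nonempty A] (hw : ∀ p, w p ≠ 0)
    (hwtop : ∀ p, w p ≠ ∞) (heven : ∀ q a, Even q.length → w q ≤ w (q ++ [a]))
    (hodd : ∀ q, Odd q.length → w q ≤ ∑ a, w (q ++ [a])) (hnil : IsSafe w Z []) :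
    P2Wins Z :=
  p2Wins_of_invariant (IsSafe w Z) hnil (fun _ hq => hq.notMem hw hwtop)
    (fun q _ hq₂ hq => hq.snoc_of_le hw (hwtop q) (heven q _ hq₂))
    (fun q hq₂ hq => hq.exists_snoc_of_le_sum (hwtop q) (hodd q hq₂))

end Potential

section PlayerTwoWeight

variable [Fintype A]

noncomputable def playerTwoWeight (p : List A) : ℝ≥0∞ :=
  ((1 : ℝ≥0∞) / Fintype.card A) ^ (p.length / 2)

lemma playerTwoWeight_ne_zero (p : List A) : playerTwoWeight p ≠ 0 := by
  simp [playerTwoWeight]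

lemma playerTwoWeight_ne_top [Nonempty A] (p : List A) : playerTwoWeight p ≠ ∞ := by
  simp [playerTwoWeight]

lemma playerTwoWeight_snoc_of_even {q : List A} (hq : Even q.length) (a : A) :
    playerTwoWeight (q ++ [a]) = playerTwoWeight q := by
  obtain ⟨k, hk⟩ := hq
  simp only [playerTwoWeight, List.length_append, List.length_singleton, hk]
  congr 1
  omega

lemma sum_playerTwoWeight_snoc_of_odd [Nonempty A] {q : List A} (hq : Odd q.length) :
    ∑ a : A, playerTwoWeight (q ++ [a]) = playerTwoWeight q := by
  obtain ⟨k, hk⟩ := hq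
  have hcard : (Fintype.card A : ℝ≥0∞) * (1 / Fintype.card A) = 1 :=
    ENNReal.mul_div_cancel' (by simp) (by simp)
  have hlen : (q.length + 1) / 2 = q.length / 2 + 1 := by omega
  simp only [playerTwoWeight, List.length_append, List.length_singleton, hlen,
    Finset.sum_const, Finset.card_univ, nsmul_eq_mul, pow_succ]
  rw [mul_comm, mul_assoc, mul_comm _ (Fintype.card A : ℝ≥0∞), hcard, mul_one]

end PlayerTwoWeight

/-- If `Z` is infinite and `∑'_{p ∈ Z} (1/|A|)^⌊len(p)/2⌋ ≤ 1`, then Player 2 has a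
winning strategy. -/
theorem infinite_sum_le_one_imp_player2_wins [Fintype A] [Nonempty A] (Z : Set (List A))
    (hinf : Z.Infinite)
    (h : ∑' p : Z, ((1 : ℝ≥0∞) / Fintype.card A) ^ (p.1.length / 2) ≤ 1) :
    P2Wins Z := by
  refine p2Wins_of_isSafe_nil (w := playerTwoWeight) playerTwoWeight_ne_zero
    playerTwoWeight_ne_top (fun q a hq => (playerTwoWeight_snoc_of_even hq a).ge)
    (fun q hq => (sum_playerTwoWeight_snoc_of_odd hq).ge) ⟨?_, fun _ => ?_⟩
  · simpa [extensionWeight, extensions, playerTwoWeight, ← tsum_subtype] using h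
  · simpa [extensions] using hinf
end

section
/- Let A be an alphabet and let Z be a set of positions over A each of which has even, positive length. Then Player 1 has a winning strategy for Z if and only if there exists a strategy s₁ of Player 1 such that every play consistent with s₁ belongs to Z_concat, where Z_concat is the set of plays x for which there exists a sequence p₁, p₂, p₃, … of elements of Z such that x is the infinite concatenation p₁ ∘ p₂ ∘ p₃ ∘ ⋯ (i.e., for every k, the concatenation p₁ ∘ ⋯ ∘ p_k is a prefix of x). -/
open scoped ENNReal

variable {A : Type*}

/-- `x` is an infinite concatenation of elements of `Z`. -/
def ConcatPlay (Z : Set (List A)) (x : ℕ → A) : Prop :=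
  ∃ p : ℕ → List A, (∀ k, p k ∈ Z) ∧
    ∀ k : ℕ, PrefixOfPlay (List.flatten (List.ofFn fun i : Fin k => p i)) x

/-! Player 1 plays `s₁` from scratch on every stretch of the play since the last completed block
of `Z`. Such a stretch is a play consistent with `s₁`, so it completes a new block in finite
time; blocks have even length, so every stretch starts at one of Player 1's turns, and they have
positive length, so the blocks tile the whole play. -/

def playPrefix (x : ℕ → A) (n : ℕ) : List A := List.ofFn fun i : Fin n => x i

@[simp] lemma length_playPrefix (x : ℕ → A) (n : ℕ) : (playPrefix x n).length = n := by
  simp [playPrefix]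

lemma playPrefix_succ (x : ℕ → A) (n : ℕ) : playPrefix x (n + 1) = playPrefix x n ++ [x n] :=
  List.ofFn_succ_last

lemma playPrefix_add (x : ℕ → A) (n m : ℕ) :
    playPrefix x (n + m) = playPrefix x n ++ playPrefix (fun i => x (n + i)) m :=
  List.ofFn_add

lemma prefixOfPlay_iff {p : List A} {x : ℕ → A} :
    PrefixOfPlay p x ↔ playPrefix x p.length = p :=
  Iff.rfl

lemma consistent1_iff {s₁ : List A → A} {x : ℕ → A} :
    Consistent1 s₁ x ↔ ∀ n, x (2 * n) = s₁ (playPrefix x (2 * n)) :=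
  Iff.rfl

lemma prefixOfPlay_playPrefix (x : ℕ → A) (n : ℕ) : PrefixOfPlay (playPrefix x n) x := by
  rw [prefixOfPlay_iff, length_playPrefix]

lemma ConcatPlay.exists_prefix_mem {Z : Set (List A)} {x : ℕ → A} (hx : ConcatPlay Z x) :
    ∃ p ∈ Z, PrefixOfPlay p x := by
  obtain ⟨p, hpZ, hpx⟩ := hx
  exact ⟨p 0, hpZ 0, by simpa using hpx 1⟩

lemma concatPlay_of_forall_exists_block {Z : Set (List A)} {P : (ℕ → A) → Prop}
    (hP : ∀ x, P x → ∃ n, playPrefix x n ∈ Z ∧ P fun i => x (n + i))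
    {x : ℕ → A} (hx : P x) : ConcatPlay Z x := by
  choose! N hNZ hNP using hP
  let t : ℕ → ℕ := fun k => Nat.rec 0 (fun _ tk => tk + N fun i => x (tk + i)) k
  have ht : ∀ k, P fun i => x (t k + i) := by
    intro k
    induction k with
    | zero => simpa [t] using hx
    | succ k ih => simpa [t, add_assoc] using hNP _ ih
  refine ⟨fun k => playPrefix (fun i => x (t k + i)) (N fun i => x (t k + i)),
    fun k => hNZ _ (ht k), fun k => ?_⟩
  suffices List.flatten (List.ofFn fun i : Fin k =>
      playPrefix (fun j => x (t i + j)) (N fun j => x (t i + j))) = playPrefix x (t k) by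
    rw [this]
    exact prefixOfPlay_playPrefix x (t k)
  induction k with
  | zero => rfl
  | succ k ih =>
    rw [List.ofFn_succ_last, List.flatten_concat]
    simp only [Fin.val_castSucc, Fin.val_last, ih]
    exact (playPrefix_add x _ _).symm

section Restart

variable (Z : Set (List A))

open scoped Classical in
noncomputable def resetStep (r : List A) (a : A) : List A :=
  if r ++ [a] ∈ Z then [] else r ++ [a]

/-- The part of a position played since the last completed block of `Z`. -/
noncomputable def residualPosition (l : List A) : List A := l.foldl (resetStep Z) []

noncomputable def restartStrategy (s₁ : List A → A) (q : List A) : A := s₁ (residualPosition Z q)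

variable {Z}

lemma residualPosition_append_of_eq_nil {l : List A} (hl : residualPosition Z l = [])
    (l' : List A) : residualPosition Z (l ++ l') = residualPosition Z l' := by
  rw [residualPosition, List.foldl_append, ← residualPosition, hl, residualPosition]

lemma residualPosition_concat (l : List A) (a : A) :
    residualPosition Z (l ++ [a]) = resetStep Z (residualPosition Z l) a :=
  List.foldl_concat _ _ _ _

lemma residualPosition_playPrefix_of_forall_not_mem {x : ℕ → A} {n : ℕ}
    (hn : ∀ k, 0 < k → k ≤ n → playPrefix x k ∉ Z) :
    residualPosition Z (playPrefix x n) = playPrefix x n := by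
  induction n with
  | zero => rfl
  | succ n ih =>
    rw [playPrefix_succ, residualPosition_concat, ih fun k hk hkn => hn k hk (by omega),
      resetStep, ← playPrefix_succ, if_neg (hn (n + 1) n.succ_pos le_rfl)]

lemma residualPosition_playPrefix_eq_nil {x : ℕ → A} {n : ℕ} (hn : playPrefix x (n + 1) ∈ Z)
    (hmin : ∀ k, 0 < k → k ≤ n → playPrefix x k ∉ Z) :
    residualPosition Z (playPrefix x (n + 1)) = [] := by
  rw [playPrefix_succ] at hn ⊢
  rw [residualPosition_concat, residualPosition_playPrefix_of_forall_not_mem hmin, resetStep,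
    if_pos hn]

lemma exists_block_of_consistent_restartStrategy
    (hZ : ∀ p ∈ Z, Even p.length ∧ 0 < p.length) {s₁ : List A → A}
    (hs₁ : ∀ x, Consistent1 s₁ x → ∃ p ∈ Z, PrefixOfPlay p x)
    {x : ℕ → A} (hx : Consistent1 (restartStrategy Z s₁) x) :
    ∃ n, playPrefix x n ∈ Z ∧ Consistent1 (restartStrategy Z s₁) fun i => x (n + i) := by
  classical
  have hex : ∃ n, playPrefix x n ∈ Z := by
    by_contra! hnone
    have hcons : Consistent1 s₁ x := consistent1_iff.2 fun m => by
      rw [consistent1_iff.1 hx m, restartStrategy,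
        residualPosition_playPrefix_of_forall_not_mem fun k _ _ => hnone k]
    obtain ⟨p, hpZ, hpx⟩ := hs₁ x hcons
    rw [prefixOfPlay_iff] at hpx
    exact hnone p.length (hpx.symm ▸ hpZ)
  obtain ⟨n, hn⟩ : ∃ n, Nat.find hex = n + 1 :=
    Nat.exists_eq_succ_of_ne_zero fun h => by simpa [h] using (hZ _ (Nat.find_spec hex)).2
  have hnZ : playPrefix x (n + 1) ∈ Z := hn ▸ Nat.find_spec hex
  have hreset : residualPosition Z (playPrefix x (n + 1)) = [] :=
    residualPosition_playPrefix_eq_nil hnZ fun k _ hk => Nat.find_min hex (by omega)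
  refine ⟨n + 1, hnZ, consistent1_iff.2 fun m => ?_⟩
  obtain ⟨j, hj⟩ := (hZ _ hnZ).1
  have hidx : 2 * (j + m) = n + 1 + 2 * m := by simp only [length_playPrefix] at hj; omega
  have := consistent1_iff.1 hx (j + m)
  rwa [hidx, restartStrategy, playPrefix_add, residualPosition_append_of_eq_nil hreset] at this

end Restart

/-- For `Z` consisting of positions of even positive length, Player 1 wins the game with
winning set `W(Z)` iff she has a strategy forcing the play into `Z_concat`. -/
theorem player1_wins_iff_wins_concat (Z : Set (List A))
    (hZ : ∀ p ∈ Z, Even p.length ∧ 0 < p.length) :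
    P1Wins Z ↔ ∃ s₁ : List A → A, ∀ x : ℕ → A, Consistent1 s₁ x → ConcatPlay Z x := by
  constructor
  · rintro ⟨s₁, hs₁⟩
    exact ⟨restartStrategy Z s₁, fun x hx => concatPlay_of_forall_exists_block
      (fun _ => exists_block_of_consistent_restartStrategy hZ hs₁) hx⟩
  · rintro ⟨s₁, hs₁⟩
    exact ⟨s₁, fun x hx => (hs₁ x hx).exists_prefix_mem⟩
end

section
/- Let A be a countable nonempty alphabet, let μ be a probability mass function on A, let C be a finite maximal prefix code over A, and let x = ⟨x₁, x₂, …⟩ ∈ A^ℕ. Then ∑_{c = ⟨c₁,…,c_n⟩ ∈ C} 2^{|{i ∈ {1,…,n} : c_i ≠ x_i}|} · ∏_{i=1}^{n} μ(c_i)/(2 − μ(x_i)) = 1. -/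
/-!
Put `g n a = 2 ^ [a ≠ x n] * μ a / (2 - μ (x n))`. Each `g n` is a probability distribution on `A`
(doubling the mass off `x n` gives total mass `2 - μ (x n)`), and the summand of `c` is
`∏ i, g i (c i)`. For any finite prefix code that is complete (every word is comparable with a
codeword) and any position-dependent probability distributions these products sum to `1`: splitting
the code by first letter, each residual code `{w | a :: w ∈ C}` is again a complete prefix code with
shorter words, and the letters' weights `g 0 a` sum to `1`. Completeness forces the alphabet to be
finite as soon as `[] ∉ C`, since every letter begins a codeword.
-/

variable {A : Type*}

/-- A prefix code: no element is a (proper) prefix of another element. -/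
def IsPrefixCode (C : Set (List A)) : Prop :=
  ∀ p ∈ C, ∀ q ∈ C, p <+: q → p = q

/-- A maximal prefix code: a prefix code not strictly contained in any prefix code. -/
def IsMaximalPrefixCode (C : Set (List A)) : Prop :=
  IsPrefixCode C ∧ ∀ D : Set (List A), IsPrefixCode D → C ⊆ D → D = C

def IsCompleteCode (C : Set (List A)) : Prop :=
  ∀ w : List A, ∃ c ∈ C, c <+: w ∨ w <+: c

theorem IsMaximalPrefixCode.isCompleteCode {C : Set (List A)} (h : IsMaximalPrefixCode C) :
    IsCompleteCode C := by
  intro w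
  by_contra! hw
  have hD : IsPrefixCode (insert w C) := by
    rintro p (rfl | hp) q (rfl | hq) hpq
    · rfl
    · exact absurd hpq (hw q hq).2
    · exact absurd hpq (hw p hp).1
    · exact h.1 p hp q hq hpq
  have hwC : w ∈ C := h.2 _ hD (Set.subset_insert w C) ▸ Set.mem_insert w C
  exact (hw w hwC).1 (List.prefix_refl w)

theorem IsPrefixCode.eq_singleton_nil {C : Set (List A)} (h : IsPrefixCode C) (hnil : [] ∈ C) :
    C = {[]} :=
  Set.eq_singleton_iff_unique_mem.2 ⟨hnil, fun c hc => (h [] hnil c hc List.nil_prefix).symm⟩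

theorem IsPrefixCode.preimage_cons {C : Set (List A)} (h : IsPrefixCode C) (a : A) :
    IsPrefixCode (List.cons a ⁻¹' C) := fun _ hp _ hq hpq =>
  List.cons_injective (h _ hp _ hq (List.cons_prefix_cons.2 ⟨rfl, hpq⟩))

theorem IsCompleteCode.preimage_cons {C : Set (List A)} (h : IsCompleteCode C) (hnil : [] ∉ C)
    (a : A) : IsCompleteCode (List.cons a ⁻¹' C) := by
  intro w
  obtain ⟨_ | ⟨b, c⟩, hc, hcw⟩ := h (a :: w)
  · exact absurd hc hnil
  · simp only [List.cons_prefix_cons] at hcw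
    refine ⟨c, ?_, ?_⟩
    · rcases hcw with ⟨rfl, -⟩ | ⟨rfl, -⟩ <;> exact hc
    · rcases hcw with ⟨-, h⟩ | ⟨-, h⟩ <;> simp [h]

theorem IsCompleteCode.finite_alphabet {C : Set (List A)} (h : IsCompleteCode C) (hC : C.Finite)
    (hnil : [] ∉ C) : Finite A := by
  have hcons : ∀ a : A, ∃ w, a :: w ∈ C := fun a => by
    obtain ⟨w, hw⟩ := (h.preimage_cons hnil a) []
    exact ⟨w, hw.1⟩
  choose w hw using hcons
  have := hC.to_subtype
  exact Finite.of_injective (fun a => (⟨a :: w a, hw a⟩ : C)) fun a b hab =>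
    (List.cons_eq_cons.1 (congrArg Subtype.val hab)).1

theorem Finset.sum_eq_sum_sum_preimage_cons [Fintype A] {M : Type*} [AddCommMonoid M]
    (C : Finset (List A)) (hnil : [] ∉ C) (f : List A → M) :
    ∑ c ∈ C, f c = ∑ a, ∑ w ∈ C.preimage (List.cons a) List.cons_injective.injOn, f (a :: w) := by
  rw [Finset.sum_sigma']
  symm
  refine Finset.sum_bij (fun p _ => p.1 :: p.2) (fun p hp => ?_) (fun p _ q _ h => ?_)
    (fun c hc => ?_) (fun _ _ => rfl)
  · simpa using hp
  · simpa [Sigma.ext_iff] using h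
  · obtain _ | ⟨a, w⟩ := c
    · exact absurd hc hnil
    · exact ⟨⟨a, w⟩, by simpa using hc, rfl⟩

theorem List.prod_get_cons {M : Type*} [CommMonoid M] (g : ℕ → A → M) (a : A) (w : List A) :
    ∏ i : Fin (a :: w).length, g i ((a :: w).get i) =
      g 0 a * ∏ i : Fin w.length, g (i + 1) (w.get i) :=
  Fin.prod_univ_succ _

theorem IsPrefixCode.sum_prod_eq_one {R : Type*} [CommSemiring R] [TopologicalSpace R]
    [T2Space R] {C : Finset (List A)} (hpc : IsPrefixCode (C : Set (List A)))
    (hcomp : IsCompleteCode (C : Set (List A))) {g : ℕ → A → R} (hg : ∀ n, HasSum (g n) 1) :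
    ∑ c ∈ C, ∏ i : Fin c.length, g i (c.get i) = 1 := by
  obtain ⟨n, hn⟩ : ∃ n, ∀ c ∈ C, c.length ≤ n := ⟨C.sup List.length, fun c => C.le_sup⟩
  induction n generalizing C g with
  | zero =>
    obtain ⟨c, hc, -⟩ := hcomp []
    rw [List.length_eq_zero_iff.1 (Nat.le_zero.1 (hn c hc))] at hc
    rw [Finset.coe_eq_singleton.1 (hpc.eq_singleton_nil hc)]
    simp
  | succ n ih =>
    by_cases hnil : [] ∈ C
    · rw [Finset.coe_eq_singleton.1 (hpc.eq_singleton_nil hnil)]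
      simp
    have := hcomp.finite_alphabet C.finite_toSet hnil
    have := Fintype.ofFinite A
    rw [C.sum_eq_sum_sum_preimage_cons hnil]
    simp_rw [List.prod_get_cons, ← Finset.mul_sum]
    calc _ = ∑ a, g 0 a * 1 := by
          refine Finset.sum_congr rfl fun a _ => congrArg _ (ih ?_ ?_ (fun k => hg (k + 1)) ?_)
          · simpa only [Finset.coe_preimage] using hpc.preimage_cons a
          · simpa only [Finset.coe_preimage] using hcomp.preimage_cons hnil a
          · intro w hw
            simpa using hn _ (Finset.mem_preimage.1 hw)
    _ = 1 := by simpa using (hasSum_fintype (g 0)).unique (hg 0)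

theorem hasSum_two_pow_ite_ne_mul_div [DecidableEq A] {p : A → ℝ} (hp : HasSum p 1)
    (hp0 : ∀ a, 0 ≤ p a) (b : A) :
    HasSum (fun a => 2 ^ (if a ≠ b then 1 else 0) * (p a / (2 - p b))) 1 := by
  have hb : 2 - p b ≠ 0 := by linarith [le_hasSum hp b fun a _ => hp0 a]
  have h := ((hp.mul_left 2).sub (hasSum_ite_eq b (p b))).div_const (2 - p b)
  rw [mul_one, div_self hb] at h
  convert h using 1
  · rfl
  funext a
  by_cases hab : a = b
  · subst hab; simp; ring
  · simp [hab]; ring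

theorem maximalPrefixCode_measure_weighted_sum_eq_one_general
    [DecidableEq A] (μ : A → NNReal) (hμ : ∑' a : A, μ a = 1)
    (C : Finset (List A)) (hmax : IsMaximalPrefixCode (↑C : Set (List A)))
    (x : ℕ → A) :
    ∑ c ∈ C, (2 : ℝ) ^ (Finset.univ.filter fun i : Fin c.length =>
        c.get i ≠ x i.val).card *
      ∏ i : Fin c.length, (μ (c.get i) : ℝ) / (2 - (μ (x i.val) : ℝ)) = 1 := by
  have hμ_summable : Summable μ := by
    by_contra h
    simp [tsum_eq_zero_of_not_summable h] at hμ
  have hμ_hasSum : HasSum (fun a => (μ a : ℝ)) 1 := NNReal.hasSum_coe.2 (hμ ▸ hμ_summable.hasSum)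
  rw [← hmax.1.sum_prod_eq_one hmax.isCompleteCode
    fun n => hasSum_two_pow_ite_ne_mul_div hμ_hasSum (fun a => (μ a).2) (x n)]
  refine Finset.sum_congr rfl fun c _ => ?_
  rw [Finset.prod_mul_distrib, Finset.prod_pow_eq_pow_sum, Finset.card_filter]

/-- For a probability mass function `μ` on a countable alphabet `A`, a finite maximal
prefix code `C` and `x ∈ A^ℕ`:
`∑_{c ∈ C} 2^{#{i : cᵢ ≠ xᵢ}} · ∏_{i=1}^{len(c)} μ(cᵢ)/(2 − μ(xᵢ)) = 1`. -/
theorem maximalPrefixCode_measure_weighted_sum_eq_one [Countable A] [Nonempty A]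
    [DecidableEq A] (μ : A → NNReal) (hμ : ∑' a : A, μ a = 1)
    (C : Finset (List A)) (hmax : IsMaximalPrefixCode (↑C : Set (List A)))
    (x : ℕ → A) :
    ∑ c ∈ C, (2 : ℝ) ^ (Finset.univ.filter fun i : Fin c.length =>
        c.get i ≠ x i.val).card *
      ∏ i : Fin c.length, (μ (c.get i) : ℝ) / (2 - (μ (x i.val) : ℝ)) = 1 :=
  maximalPrefixCode_measure_weighted_sum_eq_one_general μ hμ C hmax x
end
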